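/- Let P : [m]×[n] → [k] be a k-colored rectangular pattern, α : [m]×[n] → [ℓ] a surjective color-consistent map (α(x,y)=α(x′,y′) implies P(x,y)=P(x′,y′)), and T_α = {s_0,…,s_{ℓ−1}} the tile set whose glues are the equivalence classes of glue slots forced by conditions (b) and (c) (the coarsest identification making α a terminal assembly of P for T_α, with vertical and horizontal glue labels disjoint). Then for every tile set T = {t_0,…,t_{ℓ−1}} such that α is a terminal assembly of P for T, T is a morphic image of T_α via the bijection h(s_i) = t_i: there is a map g on glues with g(s_i(d)) = t_i(d) for all i ∈ [ℓ] and all d ∈ {N,E,S,W}, and c(s_i) = c(t_i) for all i. -/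
import Mathlib


/-- A tile type over an abstract glue alphabet `G`: four glues (north, west,
south, east) and a colour. -/
structure PTile (G : Type*) where
  north : G
  west : G
  south : G
  east : G
  color : ℕ

/-- Vertical glue slots of a tile set indexed by `Fin ℓ`: `(i, true)` is the
north slot of tile `i`, `(i, false)` its south slot.  `vrel` is the basic
identification of slots forced by condition (b): for each `x ∈ [m]` and
`1 ≤ y + 1 ≤ n - 1`, the south slot of the tile at `(x, y+1)` is identified
with the north slot of the tile at `(x, y)`.  The vertical glues of `T_α` are
the equivalence classes of the equivalence relation generated by `vrel`,
i.e. the elements of `Quot (vrel m n ℓ α)`. -/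
def vrel (m n ℓ : ℕ) (α : Fin m → Fin n → Fin ℓ) :
    (Fin ℓ × Bool) → (Fin ℓ × Bool) → Prop := fun a b =>
  ∃ (x : Fin m) (y y' : Fin n), (y : ℕ) + 1 = (y' : ℕ) ∧
    a = (α x y', false) ∧ b = (α x y, true)

/-- Horizontal glue slots: `(i, true)` is the east slot of tile `i`,
`(i, false)` its west slot; `hrel` is the identification forced by
condition (c). -/
def hrel (m n ℓ : ℕ) (α : Fin m → Fin n → Fin ℓ) :
    (Fin ℓ × Bool) → (Fin ℓ × Bool) → Prop := fun a b =>
  ∃ (x x' : Fin m) (y : Fin n), (x : ℕ) + 1 = (x' : ℕ) ∧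
    a = (α x' y, false) ∧ b = (α x y, true)

/-- Let `s` be the canonical tile set `T_α` of equivalence
classes of glue slots (as in Statement 9), realising the pattern `P` via `α`.
Then every tile set `t₀, …, t_{ℓ-1}` (over natural-number glues) for which `α`
is a terminal assembly of `P` is a morphic image of `T_α` via the bijection
`h (s i) = t i`: colours are preserved, and there is a glue map `g` with
`g ((s i) d) = (t i) d` for every index `i` and every direction `d`. -/
theorem canonical_tileset_morphism (m n ℓ k : ℕ)
    (P : Fin m → Fin n → Fin k) (α : Fin m → Fin n → Fin ℓ)
    (hsurj : Function.Surjective fun p : Fin m × Fin n => α p.1 p.2)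
    (hcc : ∀ (x : Fin m) (y : Fin n) (x' : Fin m) (y' : Fin n),
      α x y = α x' y' → P x y = P x' y')
    (s : Fin ℓ → PTile (Quot (vrel m n ℓ α) ⊕ Quot (hrel m n ℓ α)))
    (hs : ∀ i : Fin ℓ,
      (s i).north = Sum.inl (Quot.mk (vrel m n ℓ α) (i, true)) ∧
      (s i).south = Sum.inl (Quot.mk (vrel m n ℓ α) (i, false)) ∧
      (s i).east = Sum.inr (Quot.mk (hrel m n ℓ α) (i, true)) ∧
      (s i).west = Sum.inr (Quot.mk (hrel m n ℓ α) (i, false)))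
    (hscol : ∀ (x : Fin m) (y : Fin n), (s (α x y)).color = (P x y : ℕ))
    (t : Fin ℓ → PTile ℕ) (htinj : Function.Injective t)
    (htcol : ∀ (x : Fin m) (y : Fin n), (t (α x y)).color = (P x y : ℕ))
    (htv : ∀ (x : Fin m) (y y' : Fin n), (y : ℕ) + 1 = (y' : ℕ) →
      (t (α x y')).south = (t (α x y)).north)
    (hth : ∀ (x x' : Fin m) (y : Fin n), (x : ℕ) + 1 = (x' : ℕ) →
      (t (α x' y)).west = (t (α x y)).east) :
    (∀ i : Fin ℓ, (s i).color = (t i).color) ∧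
    ∃ g : (Quot (vrel m n ℓ α) ⊕ Quot (hrel m n ℓ α)) → ℕ,
      ∀ i : Fin ℓ,
        g (s i).north = (t i).north ∧ g (s i).south = (t i).south ∧
        g (s i).west = (t i).west ∧ g (s i).east = (t i).east := by
  constructor
  · intro i
    obtain ⟨⟨x, y⟩, hxy⟩ := hsurj i
    simp only at hxy
    rw [← hxy, hscol, htcol]
  · refine ⟨Sum.elim
      (Quot.lift (fun p => if p.2 then (t p.1).north else (t p.1).south) ?_)
      (Quot.lift (fun p => if p.2 then (t p.1).east else (t p.1).west) ?_), ?_⟩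
    · rintro a b ⟨x, y, y', hy, rfl, rfl⟩
      simp [htv x y y' hy]
    · rintro a b ⟨x, x', y, hx, rfl, rfl⟩
      simp [hth x x' y hx]
    · intro i
      obtain ⟨hN, hS, hE, hW⟩ := hs i
      rw [hN, hS, hE, hW]
      simp
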